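/- Let n be a positive integer and let G be a simple graph on vertex set {1,…,n}. Let M′ be the n!×n! complex matrix with rows and columns indexed by S_n whose (σ,τ) entry is sgn(σ)·sgn(τ)/n! if τ⁻¹σ is an automorphism of G and 0 otherwise, where sgn takes values in {+1,−1}. Then: (a) if the automorphism group of G is exactly {id, π} for some π ∈ K_n with π an odd permutation, then M′ = ρ_π^-; and (b) if G has no non-trivial automorphism, then M′ = ι. (M′ is the state output by the phase-inverting coset sampling algorithm applied to G.) -/
import Mathlib


open scoped Classical

/-- `K_n`: the set of fixed-point-free involutions in the symmetric group `S_n`. -/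
def Kset (n : ℕ) : Set (Equiv.Perm (Fin n)) :=
  {π | π * π = 1 ∧ ∀ i, π i ≠ i}

/-- A permutation `π` is an automorphism of a simple graph `G` if it preserves
adjacency in both directions. -/
def IsGraphAut {n : ℕ} (G : SimpleGraph (Fin n)) (π : Equiv.Perm (Fin n)) : Prop :=
  ∀ i j, G.Adj (π i) (π j) ↔ G.Adj i j

/-- The quantum state `ρ_π^-` as an `n!×n!` complex matrix indexed by `S_n`:
`ρ_π^- = (1/(2·n!)) Σ_{σ∈S_n} (e_σ - e_{σπ})(e_σ - e_{σπ})†`. -/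
noncomputable def rhoMinus (n : ℕ) (π : Equiv.Perm (Fin n)) :
    Matrix (Equiv.Perm (Fin n)) (Equiv.Perm (Fin n)) ℂ :=
  Matrix.of fun a b =>
    (1 / (2 * (Nat.factorial n : ℂ))) *
      ∑ σ : Equiv.Perm (Fin n),
        ((if a = σ then (1 : ℂ) else 0) - (if a = σ * π then (1 : ℂ) else 0)) *
        ((if b = σ then (1 : ℂ) else 0) - (if b = σ * π then (1 : ℂ) else 0))

/-- The maximally mixed state `ι = (1/n!)·I` over `S_n`. -/
noncomputable def iotaMat (n : ℕ) :
    Matrix (Equiv.Perm (Fin n)) (Equiv.Perm (Fin n)) ℂ :=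
  ((Nat.factorial n : ℂ))⁻¹ • (1 : Matrix (Equiv.Perm (Fin n)) (Equiv.Perm (Fin n)) ℂ)

/-- The state output by the phase-inverting coset sampling algorithm applied to `G`:
the matrix whose `(σ,τ)` entry is `sgn(σ)·sgn(τ)/n!` if `τ⁻¹σ` is an automorphism
of `G`, and `0` otherwise. -/
noncomputable def signedCosetSampleMat (n : ℕ) (G : SimpleGraph (Fin n)) :
    Matrix (Equiv.Perm (Fin n)) (Equiv.Perm (Fin n)) ℂ :=
  Matrix.of fun σ τ =>
    if IsGraphAut G (τ⁻¹ * σ) then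
      ((Equiv.Perm.sign σ : ℤ) : ℂ) * ((Equiv.Perm.sign τ : ℤ) : ℂ) * (Nat.factorial n : ℂ)⁻¹
    else 0

/-- Correctness of the phase-inverting coset sampling algorithm: (a) if
`Aut(G) = {id, π}` for some odd `π ∈ K_n`, the output state is `ρ_π^-`;
(b) if `G` has no non-trivial automorphism, the output state is the maximally mixed
state `ι`. -/
theorem signedCosetSampleMat_eq (n : ℕ) (hn : 0 < n) (G : SimpleGraph (Fin n)) :
    (∀ π : Equiv.Perm (Fin n), π ∈ Kset n → Equiv.Perm.sign π = -1 →
        {g : Equiv.Perm (Fin n) | IsGraphAut G g} = {1, π} →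
        signedCosetSampleMat n G = rhoMinus n π) ∧
    ({g : Equiv.Perm (Fin n) | IsGraphAut G g} = {1} →
        signedCosetSampleMat n G = iotaMat n) := by
  have hfac : (Nat.factorial n : ℂ) ≠ 0 := by
    exact_mod_cast Nat.cast_ne_zero.mpr (Nat.factorial_ne_zero n)
  have hsq : ∀ x : Equiv.Perm (Fin n),
      ((Equiv.Perm.sign x : ℤ) : ℂ) * ((Equiv.Perm.sign x : ℤ) : ℂ) = 1 := by
    intro x
    rcases Int.units_eq_one_or (Equiv.Perm.sign x) with h | h <;> rw [h] <;> norm_num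
  constructor
  · intro π hπ hsign hset
    obtain ⟨hπ2, hπf⟩ := hπ
    have hπ1 : π ≠ 1 := by
      intro h
      exact hπf ⟨0, hn⟩ (by simp [h])
    have haut : ∀ g : Equiv.Perm (Fin n), IsGraphAut G g ↔ g = 1 ∨ g = π := by
      intro g
      have := Set.ext_iff.mp hset g
      simpa using this
    have hswap : ∀ x : Equiv.Perm (Fin n), x * π * π = x := by
      intro x; rw [mul_assoc, hπ2, mul_one]
    ext a b
    have hautab : IsGraphAut G (b⁻¹ * a) ↔ a = b ∨ a = b * π := by
      rw [haut, inv_mul_eq_one, inv_mul_eq_iff_eq_mul, @eq_comm _ b a]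
    have hab2 : (a = b * π) ↔ (b = a * π) := by
      constructor
      · rintro rfl; rw [hswap]
      · rintro rfl; rw [hswap]
    simp only [signedCosetSampleMat, rhoMinus, Matrix.of_apply]
    have hsum : ∑ σ : Equiv.Perm (Fin n),
        ((if a = σ then (1 : ℂ) else 0) - (if a = σ * π then (1 : ℂ) else 0)) *
        ((if b = σ then (1 : ℂ) else 0) - (if b = σ * π then (1 : ℂ) else 0)) =
        2 * (if a = b then (1 : ℂ) else 0) - 2 * (if b = a * π then (1 : ℂ) else 0) := by
      have hc : ∀ x σ : Equiv.Perm (Fin n), (x = σ * π) ↔ (σ = x * π) := by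
        intro x σ
        constructor
        · rintro rfl; rw [hswap]
        · rintro rfl; rw [hswap]
      simp only [hc, sub_mul, mul_sub, Finset.sum_sub_distrib, ite_mul, one_mul,
        zero_mul, Finset.sum_ite_eq, Finset.sum_ite_eq', Finset.mem_univ, if_true]
      have hab1 : (b = a) ↔ (a = b) := eq_comm
      have hab2' : (a = b * π) ↔ (b = a * π) := hab2
      have hab3 : (a * π = b * π) ↔ (a = b) := by
        constructor
        · intro h; have := congrArg (· * π) h; simpa [hswap] using this
        · rintro rfl; rfl
      simp only [hab1, hab2', hab3]
      ring
    rw [hsum]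
    by_cases h1 : a = b
    · subst h1
      have hne : ¬ (a = a * π) := by
        intro h
        apply hπ1
        have := congrArg (a⁻¹ * ·) h
        simpa [mul_assoc] using this.symm
      rw [if_pos (hautab.mpr (Or.inl rfl)), if_pos rfl, if_neg (hab2.not.mp hne)]
      rw [hsq a]
      field_simp
      try ring
    · by_cases h2 : a = b * π
      · have hs : ((Equiv.Perm.sign a : ℤ) : ℂ) * ((Equiv.Perm.sign b : ℤ) : ℂ) = -1 := by
          have : Equiv.Perm.sign a = - Equiv.Perm.sign b := by
            rw [h2, map_mul, hsign, mul_neg_one]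
          rw [this]
          rcases Int.units_eq_one_or (Equiv.Perm.sign b) with h | h <;> rw [h] <;> norm_num
        rw [if_pos (hautab.mpr (Or.inr h2)), if_neg h1, if_pos (hab2.mp h2), hs]
        field_simp
        try ring
      · rw [if_neg (by rw [hautab]; tauto), if_neg h1, if_neg (fun h => h2 (hab2.mpr h))]
        ring
  · intro hset
    have haut : ∀ g : Equiv.Perm (Fin n), IsGraphAut G g ↔ g = 1 := by
      intro g
      have := Set.ext_iff.mp hset g
      simpa using this
    ext a b
    have hautab : IsGraphAut G (b⁻¹ * a) ↔ b = a := by rw [haut, inv_mul_eq_one]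
    simp only [signedCosetSampleMat, iotaMat, Matrix.of_apply, Matrix.smul_apply,
      Matrix.one_apply, smul_eq_mul]
    by_cases h1 : a = b
    · subst h1
      rw [if_pos (hautab.mpr rfl), if_pos rfl, hsq a]
      ring
    · rw [if_neg (fun h => h1 (hautab.mp h).symm), if_neg h1]
      ring
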